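/- Let Δ be a finite set, π: Δ → Δ a bijection, p a prime, and X = ℤ^Δ with π acting by permuting the basis (ω_α). Suppose λ = ∑ n_α ω_α and λ' = ∑ n'_α ω_α satisfy 0 ≤ n_α ≤ p−1 and 0 ≤ n'_α ≤ p−1 for all α, and λ − λ' ∈ (p − π)X. Then for every α, either n_α = n'_α or {n_α, n'_α} = {0, p−1}. In particular, if additionally n_α < p−1 and n'_α < p−1 for all α, then λ = λ'. -/
import Mathlib


/-- The endomorphism `p - π` of `ℤ^Δ`, where `π` permutes the basis. -/
def pMinusPerm {Δ : Type*} (π : Equiv.Perm Δ) (q : ℕ) : (Δ → ℤ) →+ (Δ → ℤ) :=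
  AddMonoidHom.mk' (fun x α => (q : ℤ) * x α - x (π.symm α)) (by
    intro x y
    funext α
    simp
    ring)

/-- If two `p`-restricted vectors are congruent mod `(p - π)ℤ^Δ`, then at each
coordinate they agree or are `{0, p-1}`; in particular regular (entries `< p-1`)
restricted vectors congruent mod `(p - π)` are equal. -/
theorem restricted_weights_congruence
    (Δ : Type*) [Fintype Δ] (π : Equiv.Perm Δ) (p : ℕ) (hp : p.Prime)
    (n n' : Δ → ℤ)
    (hn : ∀ α, 0 ≤ n α ∧ n α ≤ (p : ℤ) - 1)
    (hn' : ∀ α, 0 ≤ n' α ∧ n' α ≤ (p : ℤ) - 1)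
    (hcong : n - n' ∈ AddMonoidHom.range (pMinusPerm π p)) :
    (∀ α, n α = n' α ∨ ({n α, n' α} : Set ℤ) = {0, (p : ℤ) - 1}) ∧
    ((∀ α, n α < (p : ℤ) - 1 ∧ n' α < (p : ℤ) - 1) → n = n') := by
  classical
  obtain ⟨x, hx⟩ := hcong
  have hp2 : (2 : ℤ) ≤ (p : ℤ) := by exact_mod_cast hp.two_le
  have hxe : ∀ α, (p : ℤ) * x α - x (π.symm α) = n α - n' α := by
    intro α
    have := congrFun hx α
    simpa [pMinusPerm] using this
  have hd : ∀ α, |n α - n' α| ≤ (p : ℤ) - 1 := by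
    intro α
    have h1 := hn α; have h2 := hn' α
    rw [abs_le]; constructor <;> linarith [h1.1, h1.2, h2.1, h2.2]
  -- all coefficients have absolute value ≤ 1
  have hb : ∀ α, |x α| ≤ 1 := by
    intro α
    have hne : (Finset.univ : Finset Δ).Nonempty := ⟨α, Finset.mem_univ α⟩
    obtain ⟨β, -, hβ⟩ := Finset.exists_max_image Finset.univ (fun a => |x a|) hne
    have key : |x β| ≤ 1 := by
      have h1 : (p : ℤ) * |x β| ≤ |n β - n' β| + |x (π.symm β)| := by
        calc (p : ℤ) * |x β| = |(p : ℤ) * x β| := by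
              rw [abs_mul, abs_of_nonneg (by positivity : (0:ℤ) ≤ (p : ℤ))]
          _ = |(n β - n' β) + x (π.symm β)| := by rw [← hxe β]; ring_nf
          _ ≤ _ := abs_add_le _ _
      have h2 : |x (π.symm β)| ≤ |x β| := hβ _ (Finset.mem_univ _)
      have h3 := hd β
      nlinarith [abs_nonneg (x β)]
    exact le_trans (hβ α (Finset.mem_univ α)) key
  have hb' : ∀ α, -1 ≤ x α ∧ x α ≤ 1 := fun α => abs_le.mp (hb α)
  -- propagation of ±1 along π.symm
  have H1 : ∀ α, x α = 1 → x (π.symm α) = 1 := by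
    intro α h
    have he := hxe α
    have hdα := abs_le.mp (hd α)
    have := (hb' (π.symm α))
    rw [h] at he
    have : x (π.symm α) ≥ 1 := by linarith [hdα.2]
    linarith [(hb' (π.symm α)).2]
  have Hm1 : ∀ α, x α = -1 → x (π.symm α) = -1 := by
    intro α h
    have he := hxe α
    have hdα := abs_le.mp (hd α)
    rw [h] at he
    have : x (π.symm α) ≤ -1 := by linarith [hdα.1]
    linarith [(hb' (π.symm α)).1]
  have Hiter1 : ∀ (k : ℕ) (α : Δ), x α = 1 → x ((π.symm ^ k) α) = 1 := by
    intro k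
    induction k with
    | zero => intro α h; simpa using h
    | succ k ih =>
        intro α h
        have : (π.symm ^ (k + 1)) α = (π.symm ^ k) (π.symm α) := by
          rw [pow_succ, Equiv.Perm.mul_apply]
        rw [this]
        exact ih _ (H1 α h)
  have Hiterm1 : ∀ (k : ℕ) (α : Δ), x α = -1 → x ((π.symm ^ k) α) = -1 := by
    intro k
    induction k with
    | zero => intro α h; simpa using h
    | succ k ih =>
        intro α h
        have : (π.symm ^ (k + 1)) α = (π.symm ^ k) (π.symm α) := by
          rw [pow_succ, Equiv.Perm.mul_apply]
        rw [this]
        exact ih _ (Hm1 α h)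
  -- x is constant along orbits: x (π.symm α) = x α
  have hfix : ∀ α, x (π.symm α) = x α := by
    intro α
    have hm : 0 < orderOf (π.symm) := orderOf_pos _
    have hback : ∀ β : Δ, (π.symm ^ (orderOf π.symm - 1)) (π.symm β) = β := by
      intro β
      have : (π.symm ^ (orderOf π.symm - 1)) (π.symm β)
          = (π.symm ^ (orderOf π.symm - 1) * π.symm) β := rfl
      rw [this, ← pow_succ, Nat.sub_add_cancel hm, pow_orderOf_eq_one]
      rfl
    have hcases : x α = -1 ∨ x α = 0 ∨ x α = 1 := by
      have := hb' α; omega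
    rcases hcases with h | h | h
    · rw [Hm1 α h, h]
    · -- if x (π.symm α) were ±1, it would propagate back to α
      have hcases' : x (π.symm α) = -1 ∨ x (π.symm α) = 0 ∨ x (π.symm α) = 1 := by
        have := hb' (π.symm α); omega
      rcases hcases' with h' | h' | h'
      · exfalso
        have := Hiterm1 (orderOf π.symm - 1) (π.symm α) h'
        rw [hback α] at this
        omega
      · rw [h', h]
      · exfalso
        have := Hiter1 (orderOf π.symm - 1) (π.symm α) h'
        rw [hback α] at this
        omega
    · rw [H1 α h, h]
  -- hence n α - n' α = (p-1) * x α
  have hdiff : ∀ α, n α - n' α = ((p : ℤ) - 1) * x α := by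
    intro α
    have := hxe α
    rw [hfix α] at this
    linarith [this]
  constructor
  · intro α
    have hcases : x α = -1 ∨ x α = 0 ∨ x α = 1 := by
      have := hb' α; omega
    have hdα := hdiff α
    have h1 := hn α; have h2 := hn' α
    rcases hcases with h | h | h
    · right
      have hnα : n α = 0 := by rw [h] at hdα; linarith [h1.1, h2.2]
      have hn'α : n' α = (p : ℤ) - 1 := by rw [h] at hdα; linarith [h1.1, h2.2]
      rw [hnα, hn'α]
    · left; rw [h] at hdα; linarith
    · right
      have hnα : n α = (p : ℤ) - 1 := by rw [h] at hdα; linarith [h1.2, h2.1]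
      have hn'α : n' α = 0 := by rw [h] at hdα; linarith [h1.2, h2.1]
      rw [hnα, hn'α, Set.pair_comm]
  · intro hreg
    funext α
    have hcases : x α = -1 ∨ x α = 0 ∨ x α = 1 := by
      have := hb' α; omega
    have hdα := hdiff α
    have h1 := hn α; have h2 := hn' α
    have hr := hreg α
    rcases hcases with h | h | h
    · exfalso; rw [h] at hdα; linarith [h1.1, hr.2]
    · rw [h] at hdα; linarith
    · exfalso; rw [h] at hdα; linarith [h2.1, hr.1]
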